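/- Assume t = d (so every tile T(τ) is a bounded parallelepiped), that T(τ) is nonempty, and that each vector A(𝐧_j) ∈ ℝ^k has integer coordinates. Then the set of distinct footprint-translation vectors P'(τ) = {A(δ_1·𝐧_1 + … + δ_d·𝐧_d) : δ ∈ ℤ^d and B⟨T(τ+δ)⟩ ∩ B⟨T(τ)⟩ ≠ ∅} is finite; consequently the set P(τ) = {W(δ) : δ ∈ ℤ^d and B⟨T(τ+δ)⟩ ∩ B⟨T(τ)⟩ ≠ ∅} of projected offsets is finite, i.e., only finitely many distinct footprints overlap the footprint of a given tile even though infinitely many tiles may do so. -/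

import Mathlib

/-!
Translation by `∑ j, δ j • N j` carries `T (τ + δ)` onto `T τ`, so when the two footprints
meet, `A (∑ j, δ j • N j)` is a difference of two points of the footprint `A '' T τ`, a bounded
set since the `n j` form a basis. This vector also lies in the lattice `ℤ^k`, as every `A (N j)`
does, so only finitely many such vectors occur. Projecting onto `(ker A)ᗮ` does not change the
image under `A`, and `A` is injective on `(ker A)ᗮ`, so `W` also takes only finitely many values
on the overlapping offsets.
-/

open RealInnerProductSpace Pointwise

open Bornology Module Set Submodule

section Tiles

variable {E : Type*} [NormedAddCommGroup E] [InnerProductSpace ℝ E] {ι : Type*} [Fintype ι]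

def tile (n : ι → E) (s : ι → ℝ) (τ : ι → ℤ) : Set E :=
  {x | ∀ j, s j * (τ j : ℝ) ≤ ⟪x, n j⟫ ∧ ⟪x, n j⟫ < s j * ((τ j : ℝ) + 1)}

theorem isBounded_tile [FiniteDimensional ℝ E] {n : ι → E} (hn : LinearIndependent ℝ n)
    (hcard : Fintype.card ι = finrank ℝ E) (s : ι → ℝ) (τ : ι → ℤ) :
    IsBounded (tile n s τ) := by
  let L : E →ₗ[ℝ] ι → ℝ := LinearMap.pi fun j => innerₗ E (n j)
  have hL : Function.Injective L := fun x y hxy =>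
    InnerProductSpace.ext_inner_right_basis
      (Basis.mk hn (hn.span_eq_top_of_card_eq_finrank' hcard).ge) fun j => by
      simpa [L, real_inner_comm] using congrFun hxy j
  obtain ⟨K, -, hK⟩ := L.injective_iff_antilipschitz.mp hL
  refine (hK.isBounded_preimage (Metric.isBounded_Icc (fun j => s j * (τ j : ℝ))
    (fun j => s j * ((τ j : ℝ) + 1)))).subset fun x hx => ⟨fun j => ?_, fun j => ?_⟩
  · simpa [L, real_inner_comm] using (hx j).1
  · simpa [L, real_inner_comm] using (hx j).2.le

variable [DecidableEq ι] {n N : ι → E} {s : ι → ℝ}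

theorem inner_sum_smul_left_of_biorthogonal
    (hN : ∀ i j, ⟪N i, n j⟫ = if i = j then s j else 0) (c : ι → ℝ) (j : ι) :
    ⟪∑ i, c i • N i, n j⟫ = c j * s j := by
  simp [sum_inner, real_inner_smul_left, hN]

theorem mem_tile_add_iff (hN : ∀ i j, ⟪N i, n j⟫ = if i = j then s j else 0)
    {x : E} {τ δ : ι → ℤ} :
    x ∈ tile n s (τ + δ) ↔ x - ∑ j, (δ j : ℝ) • N j ∈ tile n s τ := by
  simp only [tile, mem_ofPred_eq, inner_sub_left, inner_sum_smul_left_of_biorthogonal hN,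
    Pi.add_apply, Int.cast_add]
  refine forall_congr' fun j => ?_
  constructor <;> rintro ⟨h₁, h₂⟩ <;> constructor <;> linarith

theorem map_sum_smul_mem_sub_of_image_tile_inter_nonempty
    (hN : ∀ i j, ⟪N i, n j⟫ = if i = j then s j else 0)
    {F : Type*} [AddCommGroup F] [Module ℝ F] (A : E →ₗ[ℝ] F) (b : F) {τ δ : ι → ℤ}
    (h : ((fun x => A x + b) '' tile n s (τ + δ) ∩ (fun x => A x + b) '' tile n s τ).Nonempty) :
    A (∑ j, (δ j : ℝ) • N j) ∈ A '' tile n s τ - A '' tile n s τ := by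
  obtain ⟨_, ⟨x₁, hx₁, rfl⟩, x₂, hx₂, hx⟩ := h
  refine ⟨A x₂, mem_image_of_mem A hx₂, _, mem_image_of_mem A ((mem_tile_add_iff hN).1 hx₁), ?_⟩
  show A x₂ - A (x₁ - _) = _
  rw [map_sub, add_right_cancel hx, sub_sub_cancel]

end Tiles

section OrthogonalKer

variable {E F : Type*} [NormedAddCommGroup E] [InnerProductSpace ℝ E]
  [AddCommGroup F] [Module ℝ F] (A : E →ₗ[ℝ] F)

theorem LinearMap.injOn_orthogonal_ker : InjOn A (LinearMap.ker A)ᗮ := fun x hx y hy hxy => by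
  have hker : x - y ∈ LinearMap.ker A := by rw [LinearMap.mem_ker, map_sub, hxy, sub_self]
  exact sub_eq_zero.mp ((LinearMap.ker A).orthogonal_disjoint.le_bot ⟨hker, sub_mem hx hy⟩)

theorem LinearMap.map_orthogonalProjectionOnto_orthogonal_ker
    [(LinearMap.ker A).HasOrthogonalProjection] (v : E) :
    A ((LinearMap.ker A)ᗮ.orthogonalProjectionOnto v) = A v := by
  have hk := (LinearMap.ker A)ᗮ.sub_starProjection_mem_orthogonal v
  rw [orthogonal_orthogonal, LinearMap.mem_ker, map_sub, sub_eq_zero] at hk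
  exact hk.symm

end OrthogonalKer

theorem EuclideanSpace.mem_span_int_basisFun_iff {κ : Type*} [Fintype κ]
    (w : EuclideanSpace ℝ κ) :
    w ∈ span ℤ (range (EuclideanSpace.basisFun κ ℝ).toBasis) ↔ ∀ l, ∃ z : ℤ, w l = z := by
  rw [Basis.mem_span_iff_repr_mem]
  simp [eq_comm]

theorem finite_overlapping_footprints_general
    (d k : ℕ)
    (n : Fin d → EuclideanSpace ℝ (Fin d)) (hn : LinearIndependent ℝ n)
    (s : Fin d → ℝ)
    (N : Fin d → EuclideanSpace ℝ (Fin d))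
    (hN : ∀ i j, ⟪N i, n j⟫ = if i = j then s j else 0)
    (A : EuclideanSpace ℝ (Fin d) →ₗ[ℝ] EuclideanSpace ℝ (Fin k))
    (b : EuclideanSpace ℝ (Fin k))
    (T : (Fin d → ℤ) → Set (EuclideanSpace ℝ (Fin d)))
    (hT : ∀ τ, T τ = {x | ∀ j, s j * (τ j : ℝ) ≤ ⟪x, n j⟫ ∧ ⟪x, n j⟫ < s j * ((τ j : ℝ) + 1)})
    (W : (Fin d → ℤ) → EuclideanSpace ℝ (Fin d))
    (hW : ∀ δ, W δ =
      (Submodule.orthogonalProjectionOnto (LinearMap.ker A)ᗮ (∑ j, (δ j : ℝ) • N j) :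
        EuclideanSpace ℝ (Fin d)))
    (τ : Fin d → ℤ)
    (hint : ∀ j l, ∃ z : ℤ, A (N j) l = (z : ℝ)) :
    {w : EuclideanSpace ℝ (Fin k) | ∃ δ : Fin d → ℤ,
        w = A (∑ j, (δ j : ℝ) • N j) ∧
        ((fun x => A x + b) '' T (τ + δ) ∩ (fun x => A x + b) '' T τ).Nonempty}.Finite ∧
    {w : EuclideanSpace ℝ (Fin d) | ∃ δ : Fin d → ℤ,
        w = W δ ∧
        ((fun x => A x + b) '' T (τ + δ) ∩ (fun x => A x + b) '' T τ).Nonempty}.Finite := by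
  obtain rfl : T = tile n s := funext hT
  have hfootprint : IsBounded (A '' tile n s τ) :=
    A.toContinuousLinearMap.lipschitz.isBounded_image
      (isBounded_tile hn (by simp) s τ)
  have hlattice (δ : Fin d → ℤ) :
      A (∑ j, (δ j : ℝ) • N j) ∈ span ℤ (range (EuclideanSpace.basisFun (Fin k) ℝ).toBasis) := by
    rw [map_sum]
    refine sum_mem fun j _ => ?_
    rw [map_smul, Int.cast_smul_eq_zsmul]
    exact zsmul_mem ((EuclideanSpace.mem_span_int_basisFun_iff _).2 (hint j)) _
  have hP' : Set.Finite {w | ∃ δ : Fin d → ℤ, w = A (∑ j, (δ j : ℝ) • N j) ∧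
      ((fun x => A x + b) '' tile n s (τ + δ) ∩ (fun x => A x + b) '' tile n s τ).Nonempty} := by
    refine (ZSpan.setFinite_inter (EuclideanSpace.basisFun (Fin k) ℝ).toBasis
      (isBounded_sub hfootprint hfootprint)).subset ?_
    rintro _ ⟨δ, rfl, hδ⟩
    exact ⟨map_sum_smul_mem_sub_of_image_tile_inter_nonempty hN A b hδ, hlattice δ⟩
  refine ⟨hP', Set.Finite.of_finite_image (f := A) (hP'.subset ?_) ?_⟩
  · rintro _ ⟨_, ⟨δ, rfl, hδ⟩, rfl⟩
    exact ⟨δ, by rw [hW, A.map_orthogonalProjectionOnto_orthogonal_ker], hδ⟩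
  · exact A.injOn_orthogonal_ker.mono <| by
      rintro _ ⟨δ, rfl, -⟩
      rw [hW]
      exact SetLike.coe_mem _

/-- with `t = d`, a nonempty tile `T τ`, and integer coordinates for each
`A (𝐧 j)`, the set of distinct footprint-translation vectors
`P'(τ) = {A (∑ j, δ j • 𝐧 j) : footprints of τ+δ and τ overlap}` is finite, and so is
the set `P(τ) = {W δ : footprints of τ+δ and τ overlap}` of projected offsets. -/
theorem finite_overlapping_footprints
    (d k : ℕ)
    (n : Fin d → EuclideanSpace ℝ (Fin d)) (hn : LinearIndependent ℝ n)
    (s : Fin d → ℝ) (hs : ∀ j, 0 < s j)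
    (N : Fin d → EuclideanSpace ℝ (Fin d))
    (hN : ∀ i j, ⟪N i, n j⟫ = if i = j then s j else 0)
    (A : EuclideanSpace ℝ (Fin d) →ₗ[ℝ] EuclideanSpace ℝ (Fin k))
    (b : EuclideanSpace ℝ (Fin k))
    (T : (Fin d → ℤ) → Set (EuclideanSpace ℝ (Fin d)))
    (hT : ∀ τ, T τ = {x | ∀ j, s j * (τ j : ℝ) ≤ ⟪x, n j⟫ ∧ ⟪x, n j⟫ < s j * ((τ j : ℝ) + 1)})
    (W : (Fin d → ℤ) → EuclideanSpace ℝ (Fin d))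
    (hW : ∀ δ, W δ =
      (Submodule.orthogonalProjectionOnto (LinearMap.ker A)ᗮ (∑ j, (δ j : ℝ) • N j) :
        EuclideanSpace ℝ (Fin d)))
    (τ : Fin d → ℤ) (hτ : (T τ).Nonempty)
    (hint : ∀ j l, ∃ z : ℤ, A (N j) l = (z : ℝ)) :
    {w : EuclideanSpace ℝ (Fin k) | ∃ δ : Fin d → ℤ,
        w = A (∑ j, (δ j : ℝ) • N j) ∧
        ((fun x => A x + b) '' T (τ + δ) ∩ (fun x => A x + b) '' T τ).Nonempty}.Finite ∧
    {w : EuclideanSpace ℝ (Fin d) | ∃ δ : Fin d → ℤ,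
        w = W δ ∧
        ((fun x => A x + b) '' T (τ + δ) ∩ (fun x => A x + b) '' T τ).Nonempty}.Finite :=
  finite_overlapping_footprints_general d k n hn s N hN A b T hT W hW τ hint
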